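/- arXiv:1605.08273 — 4 statements merged into one kernel-verified Lean document; each statement's English description precedes it below -/
import Mathlib

section
/- Let k be even and n₁ ≥ n₂ ≥ ... ≥ n_k be positive reals, and r a positive natural number. Then n₁^(1/r) - n₂^(1/r) + n₃^(1/r) - ... + n_{k-1}^(1/r) - n_k^(1/r) ≤ (n₁ - n₂ + n₃ - ... + n_{k-1} - n_k)^(1/r). -/
/-!
Write the alternating sum as `n₀ - n₁ + T`, where `T` is the alternating sum of the tail, so that
`0 ≤ T ≤ n₁ ≤ n₀`. For a concave `f` the pair `(n₁, n₀ - n₁ + T)` lies between `T` and `n₀` and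
has the same sum, hence `f T + f n₀ ≤ f n₁ + f (n₀ - n₁ + T)`; combined with the induction
hypothesis for the tail this gives `∑ ± f (nᵢ) ≤ f (∑ ± nᵢ)` for every concave `f` on `[0, ∞)`
with `f 0 ≥ 0`, in particular for `x ↦ x ^ (1 / r)`.
-/

open Finset

theorem sum_range_add_two_alternating {R : Type*} [CommRing R] (g : ℕ → R) (m : ℕ) :
    ∑ i ∈ range (m + 2), (-1 : R) ^ i * g i =
      g 0 - g 1 + ∑ i ∈ range m, (-1 : R) ^ i * g (i + 2) := by
  rw [sum_range_succ', sum_range_succ']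
  simp only [pow_succ, neg_one_mul, neg_neg, mul_neg, mul_one, pow_zero, one_mul]
  ring

theorem AntitoneOn.comp_add_two {β : Type*} [Preorder β] {n : ℕ → β} {m : ℕ}
    (h : AntitoneOn n (Set.Iio (m + 2))) : AntitoneOn (fun i ↦ n (i + 2)) (Set.Iio m) :=
  fun a ha b hb hab ↦ h (by simp only [Set.mem_Iio] at ha ⊢; omega)
    (by simp only [Set.mem_Iio] at hb ⊢; omega) (by omega)

section OrderedField

variable {𝕜 : Type*} [Field 𝕜] [LinearOrder 𝕜] [IsStrictOrderedRing 𝕜]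

/-- Writing `b` and `c` as the two mirror-image convex combinations of `a` and `d`, the two
concavity inequalities add up to this. -/
theorem ConcaveOn.add_le_add_of_add_eq {s : Set 𝕜} {f : 𝕜 → 𝕜} (hf : ConcaveOn 𝕜 s f)
    {a b c d : 𝕜} (ha : a ∈ s) (hd : d ∈ s) (hab : a ≤ b) (hbd : b ≤ d) (h : a + d = b + c) :
    f a + f d ≤ f b + f c := by
  rcases hab.eq_or_lt with rfl | hab
  · rw [show c = d by linarith]
  have had : 0 < d - a := by linarith
  set t := (b - a) / (d - a)
  have ht₀ : 0 ≤ t := div_nonneg (by linarith) had.le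
  have ht₁ : 0 ≤ 1 - t := by rw [sub_nonneg, div_le_one had]; linarith
  have hb : (1 - t) • a + t • d = b := by
    simp only [smul_eq_mul, t]; field_simp; ring
  have hc : t • a + (1 - t) • d = c := by
    simp only [smul_eq_mul, t]; field_simp; linear_combination (d - a) * h
  have hfb := hf.2 ha hd ht₁ ht₀ (by ring)
  have hfc := hf.2 ha hd ht₀ ht₁ (by ring)
  rw [hb] at hfb
  rw [hc] at hfc
  simp only [smul_eq_mul] at hfb hfc
  linarith

theorem alternating_sum_mem_Icc {n : ℕ → 𝕜} {b : 𝕜} (hb : 0 ≤ b) (j : ℕ)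
    (hn : ∀ i < 2 * j, n i ∈ Set.Icc 0 b) (hanti : AntitoneOn n (Set.Iio (2 * j))) :
    ∑ i ∈ range (2 * j), (-1 : 𝕜) ^ i * n i ∈ Set.Icc 0 b := by
  induction j generalizing n b with
  | zero => simpa using hb
  | succ j ih =>
    rw [mul_add_one] at hn hanti ⊢
    have h₀₁ : n 1 ≤ n 0 := hanti (by simp) (by simp) zero_le_one
    have hn₁ : 0 ≤ n 1 := (hn 1 (by omega)).1
    have hT := ih hn₁ (fun i hi ↦ ⟨(hn (i + 2) (by omega)).1,
      hanti (by simp) (by simp; omega) (by omega)⟩) hanti.comp_add_two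
    rw [sum_range_add_two_alternating]
    constructor <;> linarith [hT.1, hT.2, (hn 0 (by omega)).2]

theorem ConcaveOn.alternating_sum_le {f : 𝕜 → 𝕜} (hf : ConcaveOn 𝕜 (Set.Ici 0) f)
    (hf₀ : 0 ≤ f 0) {n : ℕ → 𝕜} (j : ℕ) (hn : ∀ i < 2 * j, 0 ≤ n i)
    (hanti : AntitoneOn n (Set.Iio (2 * j))) :
    ∑ i ∈ range (2 * j), (-1 : 𝕜) ^ i * f (n i) ≤
      f (∑ i ∈ range (2 * j), (-1 : 𝕜) ^ i * n i) := by
  induction j generalizing n with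
  | zero => simpa using hf₀
  | succ j ih =>
    rw [mul_add_one] at hn hanti ⊢
    set T := ∑ i ∈ range (2 * j), (-1 : 𝕜) ^ i * n (i + 2)
    have h₀₁ : n 1 ≤ n 0 := hanti (by simp) (by simp) zero_le_one
    have hT : T ∈ Set.Icc 0 (n 1) := alternating_sum_mem_Icc (hn 1 (by omega)) j
      (fun i hi ↦ ⟨hn (i + 2) (by omega), hanti (by simp) (by simp; omega) (by omega)⟩)
      hanti.comp_add_two
    have hfT := ih (fun i hi ↦ hn (i + 2) (by omega)) hanti.comp_add_two
    have hmaj : f T + f (n 0) ≤ f (n 1) + f (n 0 - n 1 + T) :=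
      hf.add_le_add_of_add_eq hT.1 (hn 0 (by omega)) hT.2 h₀₁ (by ring)
    rw [sum_range_add_two_alternating, sum_range_add_two_alternating]
    linarith

end OrderedField

theorem stmt_1_general (k : ℕ) (hk : Even k) (n : ℕ → ℝ) (r : ℕ)
    (hpos : ∀ i < k, 0 < n i)
    (hmono : ∀ i j, i ≤ j → j < k → n j ≤ n i) :
    ∑ i ∈ Finset.range k, (-1 : ℝ) ^ i * (n i) ^ (1 / (r : ℝ)) ≤
      (∑ i ∈ Finset.range k, (-1 : ℝ) ^ i * n i) ^ (1 / (r : ℝ)) := by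
  obtain ⟨j, rfl⟩ := hk
  rw [← two_mul] at hpos hmono ⊢
  have hp₀ : 0 ≤ 1 / (r : ℝ) := by positivity
  have hp₁ : 1 / (r : ℝ) ≤ 1 := (one_div (r : ℝ)).trans_le (Nat.cast_inv_le_one r)
  exact ConcaveOn.alternating_sum_le (Real.concaveOn_rpow hp₀ hp₁) (Real.rpow_nonneg le_rfl _)
    j (fun i hi ↦ (hpos i hi).le) (fun a ha b hb hab ↦ hmono a b hab hb)

theorem stmt_1 (k : ℕ) (hk : Even k) (n : ℕ → ℝ) (r : ℕ) (hr : 1 ≤ r)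
    (hpos : ∀ i < k, 0 < n i)
    (hmono : ∀ i j, i ≤ j → j < k → n j ≤ n i) :
    ∑ i ∈ Finset.range k, (-1 : ℝ) ^ i * (n i) ^ (1 / (r : ℝ)) ≤
      (∑ i ∈ Finset.range k, (-1 : ℝ) ^ i * n i) ^ (1 / (r : ℝ)) :=
  stmt_1_general k hk n r hpos hmono
end

section
/- Define sum(n) = n − 2φ(n) − 2D(n) + 2π(n) + 2, where φ is Euler's totient function, D(n) is the number of distinct prime factors of n, and π is the prime counting function. Then for every even integer n ≥ 2, sum(n) ≥ 2π(n), equivalently n − 2φ(n) ≥ 2D(n) − 2. -/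
theorem aux_stmt8 : ∀ n : ℕ, 2 ≤ n → Even n →
    2 * n.totient + 2 * n.primeFactors.card ≤ n + 2 := by
  intro n
  induction n using Nat.strong_induction_on with
  | _ n ih =>
  intro hn heven
  have hn0 : n ≠ 0 := by omega
  by_cases hodd : ∃ p ∈ n.primeFactors, p ≠ 2
  · obtain ⟨p, hpmem, hp2⟩ := hodd
    have hp : p.Prime := Nat.prime_of_mem_primeFactors hpmem
    have hpd : p ∣ n := Nat.dvd_of_mem_primeFactors hpmem
    have hp3 : 3 ≤ p := by have := hp.two_le; omega
    set a := n.factorization p with ha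
    set m := ordCompl[p] n with hmdef
    have hnm : p ^ a * m = n := Nat.ordProj_mul_ordCompl_eq_self n p
    have hpm : ¬ p ∣ m := Nat.not_dvd_ordCompl hp hn0
    have hcopp : Nat.Coprime p m := Nat.coprime_ordCompl hp hn0
    have hcop : Nat.Coprime (p ^ a) m := hcopp.pow_left a
    have ha1 : 1 ≤ a := Nat.Prime.factorization_pos_of_dvd hp hn0 hpd
    have hm0 : m ≠ 0 := (Nat.ordCompl_pos p hn0).ne'
    have h2m : 2 ∣ m := by
      have h2n : 2 ∣ n := heven.two_dvd
      have hc2 : Nat.Coprime 2 (p ^ a) :=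
        (Nat.coprime_primes Nat.prime_two hp |>.mpr (fun h => hp2 h.symm)).pow_right a
      exact hc2.dvd_of_dvd_mul_left (hnm ▸ h2n)
    have hm2 : 2 ≤ m := Nat.le_of_dvd (Nat.pos_of_ne_zero hm0) h2m
    have hmlt : m < n := by
      have hpa : 2 ≤ p ^ a := by
        calc 2 ≤ p := by omega
        _ ≤ p ^ a := Nat.le_self_pow (by omega) p
      calc m < 2 * m := by omega
      _ ≤ p ^ a * m := Nat.mul_le_mul_right m hpa
      _ = n := hnm
    have IH := ih m hmlt hm2 (even_iff_two_dvd.mpr h2m)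
    have ht : n.totient = p ^ (a - 1) * (p - 1) * m.totient := by
      rw [← hnm, Nat.totient_mul hcop, Nat.totient_prime_pow hp (by omega)]
    have hpnot : p ∉ m.primeFactors := fun h => hpm (Nat.dvd_of_mem_primeFactors h)
    have hc : n.primeFactors.card = m.primeFactors.card + 1 := by
      rw [← hnm, hcop.primeFactors_mul, Nat.primeFactors_pow p (by omega),
        hp.primeFactors, Finset.card_union_of_disjoint (by simpa using hpnot),
        Finset.card_singleton, add_comm]
    -- arithmetic
    have hq : p - 1 + 1 = p := by omega
    set P := p ^ (a - 1) with hP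
    set q := p - 1 with hqdef
    have hP1 : 1 ≤ P := Nat.one_le_pow _ _ (by omega)
    have hq2 : 2 ≤ q := by omega
    have hW1 : 1 ≤ m.primeFactors.card :=
      Finset.card_pos.mpr ⟨2, Nat.mem_primeFactors.mpr ⟨Nat.prime_two, h2m, hm0⟩⟩
    have hPp : P * p = p ^ a := by rw [hP, ← pow_succ]; congr 1; omega
    have hnval : P * (q + 1) * m = n := by rw [hq, hPp, hnm]
    rw [ht, hc, ← hnval]
    set T := m.totient with hT
    set W := m.primeFactors.card with hW
    clear_value T W P q m a
    clear ht hc hnval hnm hpm hcopp hcop hmdef ha hP hqdef hT hW hmlt ih hpmem hpd h2m hm0 heven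
    -- keep IH
    have hT0 : 0 ≤ (T:ℤ) := Int.natCast_nonneg T
    have hP1' : (1:ℤ) ≤ P := by exact_mod_cast hP1
    have hq2' : (2:ℤ) ≤ q := by exact_mod_cast hq2
    have hW1' : (1:ℤ) ≤ W := by exact_mod_cast hW1
    have hm2' : (2:ℤ) ≤ m := by exact_mod_cast hm2
    have IH' : 2*(T:ℤ) + 2*W ≤ m + 2 := by exact_mod_cast IH
    zify
    have h1 : ((P:ℤ)*q) * ((m:ℤ) + 2 - 2*T - 2*W) ≥ 0 :=
      mul_nonneg (by positivity) (by linarith)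
    have h2 : ((P:ℤ)*q - 2) * ((W:ℤ) - 1) ≥ 0 :=
      mul_nonneg (by nlinarith) (by linarith)
    have h3 : (2:ℤ) ≤ (P:ℤ)*m := by nlinarith
    nlinarith [h1, h2, h3]
  · push_neg at hodd
    have h2 : ∀ {d : ℕ}, d.Prime → d ∣ n → d = 2 := fun {d} hd hdn =>
      hodd d (Nat.mem_primeFactors.mpr ⟨hd, hdn, hn0⟩)
    have hpow := Nat.eq_prime_pow_of_unique_prime_dvd hn0 h2
    set k := n.primeFactorsList.length with hk
    have hk1 : 1 ≤ k := by
      rcases Nat.eq_zero_or_pos k with h | h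
      · rw [h, pow_zero] at hpow; omega
      · exact h
    rw [hpow, Nat.totient_prime_pow Nat.prime_two (by omega),
      Nat.primeFactors_pow 2 (by omega), Nat.prime_two.primeFactors]
    have : 2 ^ (k - 1) * 2 = 2 ^ k := by
      rw [← pow_succ]; congr 1; omega
    simp only [Finset.card_singleton]
    omega

theorem stmt_8 (n : ℕ) (hn : 2 ≤ n) (heven : Even n) :
    (n : ℤ) - 2 * n.totient - 2 * n.primeFactors.card + 2 * n.primeCounting + 2 ≥
      2 * n.primeCounting := by
  have h := aux_stmt8 n hn heven
  have h' : (2 * n.totient + 2 * n.primeFactors.card : ℤ) ≤ n + 2 := by exact_mod_cast h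
  linarith
end

section
/- For every real y ≥ 112, y^(1/6) + y^(1/10) + y^(1/14) + y^(1/15) − (3/2)·y^(1/7) − (3/2)·y^(1/11) > 0. -/
lemma rpos_aux (u : ℝ) (hu : 1 ≤ u) :
    0 < u^21 - (3/2)*u^16 + u^7 - (3/2)*u^6 + u + 1 := by
  obtain ⟨s, hs, rfl⟩ : ∃ s : ℝ, 0 ≤ s ∧ u = 1 + s := ⟨u - 1, by linarith, by ring⟩
  have expand : (1+s)^21 - (3/2)*(1+s)^16 + (1+s)^7 - (3/2)*(1+s)^6 + (1+s) + 1 =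
      (1 - 4*s + 57/2*s^2) + (495*s^3 + 6535/2*s^4 + 13809*s^5 + 84515/2*s^6
        + 99121*s^7 + 184185*s^8 + 276770*s^9 + 340704*s^10 + 346164*s^11
        + 291200*s^12 + 202650*s^13 + 116100*s^14 + 54240*s^15 + 40695/2*s^16
        + 5985*s^17 + 1330*s^18 + 210*s^19 + 21*s^20 + s^21) := by ring
  rw [expand]
  have h2 : 0 < 1 - 4*s + 57/2*s^2 := by nlinarith [sq_nonneg (57*s - 8)]
  have h3 : 0 ≤ 495*s^3 + 6535/2*s^4 + 13809*s^5 + 84515/2*s^6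
        + 99121*s^7 + 184185*s^8 + 276770*s^9 + 340704*s^10 + 346164*s^11
        + 291200*s^12 + 202650*s^13 + 116100*s^14 + 54240*s^15 + 40695/2*s^16
        + 5985*s^17 + 1330*s^18 + 210*s^19 + 21*s^20 + s^21 := by positivity
  linarith

theorem stmt_15 (y : ℝ) (hy : 112 ≤ y) :
    y ^ ((1 : ℝ) / 6) + y ^ ((1 : ℝ) / 10) + y ^ ((1 : ℝ) / 14) + y ^ ((1 : ℝ) / 15)
      - (3 / 2) * y ^ ((1 : ℝ) / 7) - (3 / 2) * y ^ ((1 : ℝ) / 11) > 0 := by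
  have hy0 : (0:ℝ) < y := by linarith
  set t : ℝ := y ^ ((1:ℝ)/2310) with ht
  have ht1 : (1:ℝ) ≤ t := Real.one_le_rpow (by linarith) (by norm_num)
  have ht0 : (0:ℝ) < t := lt_of_lt_of_le one_pos ht1
  have pow_eq : ∀ n : ℕ, (n : ℝ) / 2310 = (n : ℝ) * (1/2310) := by intro n; ring
  have key : ∀ n : ℕ, y ^ ((1:ℝ)/2310 * n) = t ^ n := by
    intro n
    rw [ht, ← Real.rpow_natCast (y ^ ((1:ℝ)/2310)) n, ← Real.rpow_mul hy0.le]
  have h6 : y ^ ((1:ℝ)/6) = t ^ (385:ℕ) := by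
    rw [← key 385]; norm_num
  have h10 : y ^ ((1:ℝ)/10) = t ^ (231:ℕ) := by
    rw [← key 231]; norm_num
  have h14 : y ^ ((1:ℝ)/14) = t ^ (165:ℕ) := by
    rw [← key 165]; norm_num
  have h15 : y ^ ((1:ℝ)/15) = t ^ (154:ℕ) := by
    rw [← key 154]; norm_num
  have h7 : y ^ ((1:ℝ)/7) = t ^ (330:ℕ) := by
    rw [← key 330]; norm_num
  have h11 : y ^ ((1:ℝ)/11) = t ^ (210:ℕ) := by
    rw [← key 210]; norm_num
  rw [h6, h10, h14, h15, h7, h11]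
  have hu1 : (1:ℝ) ≤ t^11 := one_le_pow₀ ht1
  have hr := rpos_aux (t^11) hu1
  have h56 : t^56 ≤ t^66 := pow_le_pow_right₀ ht1 (by norm_num)
  have hq : 0 < t^231 - (3/2)*t^176 + t^77 - (3/2)*t^56 + t^11 + 1 := by
    have e : (t^11)^21 - (3/2)*(t^11)^16 + (t^11)^7 - (3/2)*(t^11)^6 + t^11 + 1
        = t^231 - (3/2)*t^176 + t^77 - (3/2)*t^66 + t^11 + 1 := by ring
    rw [e] at hr
    linarith
  have hpos : (0:ℝ) < t^154 := pow_pos ht0 154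
  have factored : t^154 * (t^231 - (3/2)*t^176 + t^77 - (3/2)*t^56 + t^11 + 1)
      = t ^ 385 + t ^ 231 + t ^ 165 + t ^ 154 - 3 / 2 * t ^ 330 - 3 / 2 * t ^ 210 := by
    ring
  have := mul_pos hpos hq
  rw [factored] at this
  linarith
end

section
/- For every real x ≥ 112, (2/3)x − x^(1/2) − x^(1/3) − x^(1/5) − x^(1/13) − x^(1/17) − x^(1/19) > 0. -/
theorem stmt_16 (x : ℝ) (hx : 112 ≤ x) :
    (2 / 3) * x - x ^ ((1 : ℝ) / 2) - x ^ ((1 : ℝ) / 3) - x ^ ((1 : ℝ) / 5)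
      - x ^ ((1 : ℝ) / 13) - x ^ ((1 : ℝ) / 17) - x ^ ((1 : ℝ) / 19) > 0 := by
  have hx0 : (0 : ℝ) < x := by linarith
  have hx1 : (1 : ℝ) ≤ x := by linarith
  set s := x ^ ((1 : ℝ) / 2) with hs
  have hss : s * s = x := by
    rw [hs, ← Real.rpow_add hx0]
    norm_num
  have hs0 : 0 ≤ s := Real.rpow_nonneg hx0.le _
  have h3 : x ^ ((1 : ℝ) / 3) ≤ s := Real.rpow_le_rpow_of_exponent_le hx1 (by norm_num)
  have h5 : x ^ ((1 : ℝ) / 5) ≤ s := Real.rpow_le_rpow_of_exponent_le hx1 (by norm_num)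
  have h13 : x ^ ((1 : ℝ) / 13) ≤ s := Real.rpow_le_rpow_of_exponent_le hx1 (by norm_num)
  have h17 : x ^ ((1 : ℝ) / 17) ≤ s := Real.rpow_le_rpow_of_exponent_le hx1 (by norm_num)
  have h19 : x ^ ((1 : ℝ) / 19) ≤ s := Real.rpow_le_rpow_of_exponent_le hx1 (by norm_num)
  nlinarith [sq_nonneg (s - 9), sq_nonneg s]
end
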